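/- For every k ≥ 1, every m ≥ 2^k and every n ≥ 1, the element z_{m,n} belongs to Γ^{2^k}; consequently the subgroup ⟨z_{m,n} : m ≥ 2^k, n ≥ 1⟩ is contained in Γ^{2^k}. (The containment established in the proof of Proposition 3.4 of the paper, giving the lower-bound direction of G^{2^k} ∩ Z = L_kQ_k.) -/

import Mathlib

/-!
Write `σ g = x⁻¹ g x`, so that `σ c_i = c_i c_{i+1}`, and compute modulo `Z`: it is central in `H`
and `σ`-invariant, and modulo `Z` the `c_i` commute and square to `1`. By doubling,
`σ^(2^k) c_i ≡ c_i c_{i+2^k}`, and since `x^(-2N) (x h)^(2N) = σ^N (x^(-N) (x h)^N) · x^(-N) (x h)^N`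
the element `g = x^(-2^k) (x c_{m-2^k+1})^(2^k)` of `Γ^{2^k}` satisfies `g ≡ c_m`. As `Z` is central
in `H`, `z_{m,n} = [g, c_n] = g⁻¹ g^{c_n}`, which lies in the normal subgroup `Γ^{2^k}`.
-/

namespace Paper

variable {G : Type*} [Group G]

/-- The paper's commutator `[a,b] = a⁻¹ b⁻¹ a b`. -/
def pc {G : Type*} [Group G] (a b : G) : G := a⁻¹ * b⁻¹ * a * b

/-- The left-normed iterated commutator `[a, x, (r)…, x]`. -/
def itc {G : Type*} [Group G] (x a : G) : ℕ → G
  | 0 => a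
  | r + 1 => pc (itc x a r) x

/-- `c_i`, where `c_1 = y` and `c_{i+1} = [c_i, x]`; equivalently `c_i = [y, x, (i-1)…, x]`. -/
def cc (x y : G) (i : ℕ) : G := itc x y (i - 1)

/-- `z_{m,n} = [c_m, c_n]`. -/
def zz (x y : G) (m n : ℕ) : G := pc (cc x y m) (cc x y n)

/-- `H = ⟨c_i : i ≥ 1⟩`. -/
def Hsub (x y : G) : Subgroup G :=
  Subgroup.closure {g | ∃ i, 1 ≤ i ∧ g = cc x y i}

/-- `Z = ⟨c_l², z_{m,n} : l, m, n ≥ 1⟩`. -/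
def Zsub (x y : G) : Subgroup G :=
  Subgroup.closure ({g | ∃ l, 1 ≤ l ∧ g = cc x y l ^ 2} ∪
    {g | ∃ m n, 1 ≤ m ∧ 1 ≤ n ∧ g = zz x y m n})

/-- `w_{i,j,k} = ∏_{t=1}^{2^k−1} [z_{i+t,j+t−1}, x, (2^k−1−t)…, x]`,
factors in order of increasing `t` (reindexed by `t ↦ t+1`). -/
def ww (x y : G) (i j k : ℕ) : G :=
  ((List.range (2 ^ k - 1)).map
    (fun t => itc x (zz x y (i + t + 1) (j + t)) (2 ^ k - 2 - t))).prod

/-- `L_k`, the normal closure of `{w_{i,j,k} : i,j ≥ 1} ∪ {z_{m,n} : m ≥ 2^k, n ≥ 1}`. -/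
def Lsub (x y : G) (k : ℕ) : Subgroup G :=
  Subgroup.normalClosure ({g | ∃ i j, 1 ≤ i ∧ 1 ≤ j ∧ g = ww x y i j k} ∪
    {g | ∃ m n, 2 ^ k ≤ m ∧ 1 ≤ n ∧ g = zz x y m n})

/-- `Q_k = ⟨c_l² : l ≥ 2^{k−1}⟩`. -/
def Qsub (x y : G) (k : ℕ) : Subgroup G :=
  Subgroup.closure {g | ∃ l, 2 ^ (k - 1) ≤ l ∧ g = cc x y l ^ 2}

/-- `d_k(h) = [h,x,(2^k−1)…,x]⁻¹ · x^{−2^k} · (xh)^{2^k}`. -/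
def dd (x y : G) (k : ℕ) (h : G) : G :=
  (itc x h (2 ^ k - 1))⁻¹ * (x ^ 2 ^ k)⁻¹ * (x * h) ^ 2 ^ k

/-- `Γ^{2^k} = ⟨g^{2^k} : g ∈ Γ⟩`. -/
def pow2Sub (G : Type*) [Group G] (k : ℕ) : Subgroup G :=
  Subgroup.closure {g | ∃ a : G, g = a ^ 2 ^ k}

/-- `ζ(h₁,h₂) = ∏_{ℓ=0}^{2^k−2} [h₁^x, x, (ℓ)…, x, h₂, x, (2^k−2−ℓ)…, x]`,
factors in order of increasing `ℓ`. -/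
def zeta (x : G) (k : ℕ) (h₁ h₂ : G) : G :=
  ((List.range (2 ^ k - 1)).map
    (fun l => itc x (pc (itc x (x⁻¹ * h₁ * x) l) h₂) (2 ^ k - 2 - l))).prod

open Subgroup

theorem pc_inv (a b : G) : (pc a b)⁻¹ = pc b a := by
  simp only [pc]; group

theorem pc_mem_of_mem_left {N : Subgroup G} [N.Normal] {a : G} (ha : a ∈ N) (b : G) :
    pc a b ∈ N := by
  have h : pc a b = a⁻¹ * (b⁻¹ * a * b⁻¹⁻¹) := by simp only [pc, inv_inv]; group
  rw [h]
  exact mul_mem (inv_mem ha) (Normal.conj_mem ‹_› a ha b⁻¹)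

theorem conj_eq_self_of_mem_centralizer {S : Set G} {z h : G} (hz : z ∈ centralizer S)
    (hh : h ∈ S) : h⁻¹ * z * h = z := by
  rw [mul_assoc, ← mem_centralizer_iff.1 hz h hh, inv_mul_cancel_left]

theorem conj_pc (g a b : G) : g⁻¹ * pc a b * g = pc (g⁻¹ * a * g) (g⁻¹ * b * g) := by
  simp only [pc]; group

theorem conj_mem_closure {S : Set G} {g z : G} (hS : ∀ s ∈ S, g⁻¹ * s * g ∈ closure S)
    (hz : z ∈ closure S) : g⁻¹ * z * g ∈ closure S := by
  have h : closure S ≤ (closure S).comap (MulAut.conj g⁻¹).toMonoidHom :=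
    (closure_le _).2 fun s hs => by simpa using hS s hs
  simpa using h hz

section CentralCommutators

variable {S : Set G} {Z : Subgroup G}

theorem pc_mem_of_forall_pc_mem (hZ : Z ≤ centralizer (closure S)) {a : G}
    (ha : ∀ s ∈ S, pc s a ∈ Z) {b : G} (hb : b ∈ closure S) : pc b a ∈ Z := by
  induction hb using Subgroup.closure_induction with
  | mem s hs => exact ha s hs
  | one => simp [pc]
  | mul b b' _ hb' ih ih' =>
    have h : pc (b * b') a = b'⁻¹ * pc b a * b' * pc b' a := by simp only [pc]; group
    rw [h, conj_eq_self_of_mem_centralizer (hZ ih) hb']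
    exact mul_mem ih ih'
  | inv b hb ih =>
    have h : pc b⁻¹ a = b⁻¹⁻¹ * (pc b a)⁻¹ * b⁻¹ := by simp only [pc, inv_inv]; group
    rw [h, conj_eq_self_of_mem_centralizer (hZ (inv_mem ih)) (inv_mem hb)]
    exact inv_mem ih

theorem pc_mem_of_mem_closure (hZ : Z ≤ centralizer (closure S))
    (hS : ∀ s ∈ S, ∀ t ∈ S, pc s t ∈ Z) {a b : G} (ha : a ∈ closure S) (hb : b ∈ closure S) :
    pc a b ∈ Z := by
  refine pc_mem_of_forall_pc_mem hZ (fun s hs => ?_) ha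
  rw [← pc_inv]
  exact inv_mem (pc_mem_of_forall_pc_mem hZ (fun t ht => hS t ht s hs) hb)

end CentralCommutators

def GModEq (Z : Subgroup G) (a b : G) : Prop := b⁻¹ * a ∈ Z

notation:50 a:51 " ≡[" Z "] " b:51 => GModEq Z a b

namespace GModEq

variable {Z : Subgroup G} {a b c d : G}

@[refl]
protected theorem refl (a : G) : a ≡[Z] a := by
  simp [GModEq]

protected theorem trans (h₁ : a ≡[Z] b) (h₂ : b ≡[Z] c) : a ≡[Z] c := by
  have h := mul_mem h₂ h₁
  rwa [mul_assoc, mul_inv_cancel_left] at h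

instance : Trans (GModEq Z) (GModEq Z) (GModEq Z) := ⟨GModEq.trans⟩

theorem one_iff : a ≡[Z] 1 ↔ a ∈ Z := by
  simp [GModEq]

theorem mul_comm_of_pc_mem (h : pc a b ∈ Z) : a * b ≡[Z] b * a := by
  have e : (b * a)⁻¹ * (a * b) = pc a b := by simp only [pc]; group
  rwa [GModEq, e]

theorem mul {S : Set G} (hZ : Z ≤ centralizer S) (hd : d ∈ S)
    (h₁ : a ≡[Z] b) (h₂ : c ≡[Z] d) : a * c ≡[Z] b * d := by
  have e : (b * d)⁻¹ * (a * c) = d⁻¹ * (b⁻¹ * a) * d * (d⁻¹ * c) := by group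
  rw [GModEq, e, conj_eq_self_of_mem_centralizer (hZ h₁) hd]
  exact mul_mem h₁ h₂

theorem conj {g : G} (hg : ∀ z ∈ Z, g⁻¹ * z * g ∈ Z) (h : a ≡[Z] b) :
    g⁻¹ * a * g ≡[Z] g⁻¹ * b * g := by
  have e : (g⁻¹ * b * g)⁻¹ * (g⁻¹ * a * g) = g⁻¹ * (b⁻¹ * a) * g := by group
  rw [GModEq, e]
  exact hg _ h

theorem pc_eq {H : Subgroup G} (hZ : Z ≤ centralizer H) (hb : b ∈ H) (hc : c ∈ H)
    (h : a ≡[Z] b) : pc a c = pc b c := by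
  obtain ⟨ζ, hζ, rfl⟩ : ∃ ζ ∈ Z, a = b * ζ := ⟨b⁻¹ * a, h, by group⟩
  have hbc : pc b c ∈ H := by
    unfold pc; exact mul_mem (mul_mem (mul_mem (inv_mem hb) (inv_mem hc)) hb) hc
  have e : pc (b * ζ) c = ζ⁻¹ * pc b c * (c⁻¹ * ζ * c) := by simp only [pc]; group
  rw [e, conj_eq_self_of_mem_centralizer (hZ hζ) hc, mul_assoc,
    mem_centralizer_iff.1 (hZ hζ) _ hbc, inv_mul_cancel_left]

end GModEq

instance pow2Sub_normal (k : ℕ) : (pow2Sub G k).Normal where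
  conj_mem n hn g := by
    have h : pow2Sub G k ≤ (pow2Sub G k).comap (MulAut.conj g).toMonoidHom :=
      (closure_le _).2 fun _ ⟨a, ha⟩ => subset_closure ⟨g * a * g⁻¹, by simp [ha, conj_pow]⟩
    simpa using h hn

theorem inv_pow_mul_pow_mem_pow2Sub (x h : G) (k : ℕ) :
    (x ^ 2 ^ k)⁻¹ * (x * h) ^ 2 ^ k ∈ pow2Sub G k :=
  mul_mem (inv_mem (subset_closure ⟨x, rfl⟩)) (subset_closure ⟨x * h, rfl⟩)

-- `itc x y i` is `c_{i+1}`: indexing from `0` avoids the truncated subtraction in `cc`.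
section Sequence

variable (x y : G)

theorem conj_itc (i : ℕ) : x⁻¹ * itc x y i * x = itc x y i * itc x y (i + 1) := by
  simp only [itc, pc]; group

theorem Hsub_eq : Hsub x y = closure (Set.range (itc x y)) := by
  unfold Hsub
  congr 1
  ext g
  constructor
  · rintro ⟨i, -, rfl⟩; exact ⟨i - 1, rfl⟩
  · rintro ⟨i, rfl⟩; exact ⟨i + 1, by omega, rfl⟩

theorem itc_mem_Hsub (i : ℕ) : itc x y i ∈ Hsub x y := by
  rw [Hsub_eq]; exact subset_closure ⟨i, rfl⟩

theorem sq_itc_mem_Zsub (l : ℕ) : itc x y l ^ 2 ∈ Zsub x y :=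
  subset_closure (Or.inl ⟨l + 1, by omega, rfl⟩)

theorem pc_itc_mem_Zsub (m n : ℕ) : pc (itc x y m) (itc x y n) ∈ Zsub x y :=
  subset_closure (Or.inr ⟨m + 1, n + 1, by omega, by omega, rfl⟩)

variable {x y}

theorem pc_mem_Zsub (hZ : Zsub x y ≤ centralizer (Hsub x y))
    {a b : G} (ha : a ∈ Hsub x y) (hb : b ∈ Hsub x y) : pc a b ∈ Zsub x y := by
  rw [Hsub_eq] at hZ ha hb
  refine pc_mem_of_mem_closure hZ ?_ ha hb
  rintro _ ⟨m, rfl⟩ _ ⟨n, rfl⟩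
  exact pc_itc_mem_Zsub x y m n

theorem conj_sq_itc_mem_Zsub (hZ : Zsub x y ≤ centralizer (Hsub x y))
    (i : ℕ) : x⁻¹ * itc x y i ^ 2 * x ∈ Zsub x y := by
  have hH := itc_mem_Hsub x y
  have e : x⁻¹ * itc x y i ^ 2 * x = (itc x y i * itc x y (i + 1)) ^ 2 := by
    rw [← conj_itc, pow_two, pow_two]; group
  rw [e, ← GModEq.one_iff]
  calc (itc x y i * itc x y (i + 1)) ^ 2
      = itc x y i * (itc x y (i + 1) * itc x y i) * itc x y (i + 1) := by
        simp only [pow_two, mul_assoc]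
    _ ≡[Zsub x y] itc x y i * (itc x y i * itc x y (i + 1)) * itc x y (i + 1) :=
        ((GModEq.refl _).mul hZ (mul_mem (hH _) (hH _))
          (GModEq.mul_comm_of_pc_mem (pc_itc_mem_Zsub x y _ _))).mul hZ (hH _) (.refl _)
    _ = itc x y i ^ 2 * itc x y (i + 1) ^ 2 := by simp only [pow_two, mul_assoc]
    _ ≡[Zsub x y] 1 * 1 :=
        (GModEq.one_iff.2 (sq_itc_mem_Zsub x y _)).mul hZ (one_mem _)
          (GModEq.one_iff.2 (sq_itc_mem_Zsub x y _))
    _ = 1 := mul_one 1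

theorem conj_mem_Zsub (hZ : Zsub x y ≤ centralizer (Hsub x y))
    {z : G} (hz : z ∈ Zsub x y) : x⁻¹ * z * x ∈ Zsub x y := by
  refine conj_mem_closure ?_ hz
  rintro _ (⟨l, -, rfl⟩ | ⟨m, n, -, -, rfl⟩)
  · exact conj_sq_itc_mem_Zsub hZ (l - 1)
  · rw [zz, conj_pc, cc, cc, conj_itc, conj_itc]
    exact pc_mem_Zsub hZ (mul_mem (itc_mem_Hsub x y _) (itc_mem_Hsub x y _))
      (mul_mem (itc_mem_Hsub x y _) (itc_mem_Hsub x y _))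

theorem conj_pow_mem_Zsub (hZ : Zsub x y ≤ centralizer (Hsub x y))
    (N : ℕ) {z : G} (hz : z ∈ Zsub x y) :
    (x ^ N)⁻¹ * z * x ^ N ∈ Zsub x y := by
  induction N with
  | zero => simpa using hz
  | succ N ih =>
    have e : (x ^ (N + 1))⁻¹ * z * x ^ (N + 1) = x⁻¹ * ((x ^ N)⁻¹ * z * x ^ N) * x := by
      rw [pow_succ]; group
    rw [e]
    exact conj_mem_Zsub hZ ih

theorem conj_two_pow_itc_gmodEq (hZ : Zsub x y ≤ centralizer (Hsub x y))
    (k i : ℕ) :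
    (x ^ 2 ^ k)⁻¹ * itc x y i * x ^ 2 ^ k ≡[Zsub x y] itc x y i * itc x y (i + 2 ^ k) := by
  induction k generalizing i with
  | zero => rw [pow_zero, pow_one, conj_itc]
  | succ k ih =>
    have hH := itc_mem_Hsub x y
    set N := 2 ^ k
    have hN : 2 ^ (k + 1) = N + N := by rw [pow_succ]; omega
    calc (x ^ 2 ^ (k + 1))⁻¹ * itc x y i * x ^ 2 ^ (k + 1)
        = (x ^ N)⁻¹ * ((x ^ N)⁻¹ * itc x y i * x ^ N) * x ^ N := by rw [hN, pow_add]; group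
      _ ≡[Zsub x y] (x ^ N)⁻¹ * (itc x y i * itc x y (i + N)) * x ^ N :=
          (ih i).conj fun _ => conj_pow_mem_Zsub hZ N
      _ = ((x ^ N)⁻¹ * itc x y i * x ^ N) * ((x ^ N)⁻¹ * itc x y (i + N) * x ^ N) := by group
      _ ≡[Zsub x y] (itc x y i * itc x y (i + N)) * (itc x y (i + N) * itc x y (i + N + N)) :=
          (ih i).mul hZ (mul_mem (hH _) (hH _)) (ih (i + N))
      _ = itc x y i * itc x y (i + N) ^ 2 * itc x y (i + N + N) := by
          simp only [pow_two, mul_assoc]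
      _ ≡[Zsub x y] itc x y i * 1 * itc x y (i + N + N) :=
          ((GModEq.refl _).mul hZ (one_mem _) (GModEq.one_iff.2 (sq_itc_mem_Zsub x y _))).mul
            hZ (hH _) (.refl _)
      _ = itc x y i * itc x y (i + 2 ^ (k + 1)) := by rw [mul_one, hN, add_assoc]

theorem inv_pow_mul_pow_itc_gmodEq (hZ : Zsub x y ≤ centralizer (Hsub x y))
    (k i : ℕ) :
    (x ^ 2 ^ k)⁻¹ * (x * itc x y i) ^ 2 ^ k ≡[Zsub x y] itc x y (i + 2 ^ k - 1) := by
  induction k with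
  | zero => rw [pow_zero, pow_one, pow_one, inv_mul_cancel_left, Nat.add_sub_cancel]
  | succ k ih =>
    have hH := itc_mem_Hsub x y
    set N := 2 ^ k
    set j := i + N - 1
    have hN : 2 ^ (k + 1) = N + N := by rw [pow_succ]; omega
    have hj : i + 2 ^ (k + 1) - 1 = j + N := by have := Nat.one_le_two_pow (n := k); omega
    calc (x ^ 2 ^ (k + 1))⁻¹ * (x * itc x y i) ^ 2 ^ (k + 1)
        = (x ^ N)⁻¹ * ((x ^ N)⁻¹ * (x * itc x y i) ^ N) * x ^ N
            * ((x ^ N)⁻¹ * (x * itc x y i) ^ N) := by rw [hN, pow_add, pow_add]; group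
      _ ≡[Zsub x y] (x ^ N)⁻¹ * itc x y j * x ^ N * itc x y j :=
          (ih.conj fun _ => conj_pow_mem_Zsub hZ N).mul hZ (hH j) ih
      _ ≡[Zsub x y] itc x y j * itc x y (j + N) * itc x y j :=
          (conj_two_pow_itc_gmodEq hZ k j).mul hZ (hH j) (.refl _)
      _ = itc x y j * (itc x y (j + N) * itc x y j) := mul_assoc _ _ _
      _ ≡[Zsub x y] itc x y j * (itc x y j * itc x y (j + N)) :=
          (GModEq.refl _).mul hZ (mul_mem (hH _) (hH _))
            (GModEq.mul_comm_of_pc_mem (pc_itc_mem_Zsub x y _ _))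
      _ = itc x y j ^ 2 * itc x y (j + N) := by simp only [pow_two, mul_assoc]
      _ ≡[Zsub x y] 1 * itc x y (j + N) :=
          (GModEq.one_iff.2 (sq_itc_mem_Zsub x y _)).mul hZ (hH _) (.refl _)
      _ = itc x y (i + 2 ^ (k + 1) - 1) := by rw [one_mul, hj]

end Sequence

theorem zz_mem_powers_general (x y : G)
    (hca : ∀ z ∈ Zsub x y, ∀ h ∈ Hsub x y, z * h = h * z)
    (k : ℕ) :
    (∀ m n : ℕ, 2 ^ k ≤ m → 1 ≤ n → zz x y m n ∈ pow2Sub G k) ∧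
      Subgroup.closure {g | ∃ m n, 2 ^ k ≤ m ∧ 1 ≤ n ∧ g = zz x y m n} ≤ pow2Sub G k := by
  have hZ : Zsub x y ≤ centralizer (Hsub x y) := fun z hz =>
    mem_centralizer_iff.2 fun h hh => (hca z hz h hh).symm
  have hmem : ∀ m n : ℕ, 2 ^ k ≤ m → 1 ≤ n → zz x y m n ∈ pow2Sub G k := by
    intro m n hm _
    have hg := inv_pow_mul_pow_itc_gmodEq hZ k (m - 2 ^ k)
    rw [Nat.sub_add_cancel hm] at hg
    rw [zz, cc, cc, ← hg.pc_eq hZ (itc_mem_Hsub x y _) (itc_mem_Hsub x y _)]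
    exact pc_mem_of_mem_left (inv_pow_mul_pow_mem_pow2Sub x _ k) _
  exact ⟨hmem, (closure_le _).2 fun _ ⟨m, n, hm, hn, hg⟩ => hg ▸ hmem m n hm hn⟩

theorem zz_mem_powers (x y : G)
    (hca : ∀ z ∈ Zsub x y, ∀ h ∈ Hsub x y, z * h = h * z)
    (hz2 : ∀ z ∈ Zsub x y, z ^ 2 = 1)
    (k : ℕ) (hk : 1 ≤ k) :
    (∀ m n : ℕ, 2 ^ k ≤ m → 1 ≤ n → zz x y m n ∈ pow2Sub G k) ∧
      Subgroup.closure {g | ∃ m n, 2 ^ k ≤ m ∧ 1 ≤ n ∧ g = zz x y m n} ≤ pow2Sub G k :=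
  zz_mem_powers_general x y hca k

end Paper
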